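/- Let α be a d-face (d ≥ 1) of the clique complex of a graph G. Then the Forman-Ricci curvature satisfies F_d(α) = (d+2)|π_α| + 2(d+1) − Σ_{γ ∈ ∂(α)} |π_γ|. -/
import Mathlib


open Finset

variable {V : Type*} [Fintype V] [DecidableEq V]

/-- Common neighborhood of a finite vertex set: vertices adjacent to every element of `S`. -/
def pi (G : SimpleGraph V) (S : Finset V) : Set V := {v | ∀ x ∈ S, G.Adj x v}

/-- A `d`-face of the clique complex: a `(d+1)`-element vertex set inducing a complete subgraph. -/
def IsFace (G : SimpleGraph V) (d : ℕ) (α : Finset V) : Prop :=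
  α.card = d + 1 ∧ G.IsClique (α : Set V)

/-- `α'` is a neighbour of the `d`-face `α`: a distinct `d`-face sharing a common
`(d-1)`-face (a `d`-element clique contained in both). -/
def Nbr (G : SimpleGraph V) (d : ℕ) (α α' : Finset V) : Prop :=
  IsFace G d α' ∧ α' ≠ α ∧
    ∃ γ : Finset V, γ.card = d ∧ G.IsClique (γ : Set V) ∧ γ ⊆ α ∧ γ ⊆ α'

/-- Transverse neighbour: a neighbour such that some `(d+1)`-face contains both. -/
def Transv (G : SimpleGraph V) (d : ℕ) (α α' : Finset V) : Prop :=
  Nbr G d α α' ∧ ∃ β : Finset V, IsFace G (d + 1) β ∧ α ⊆ β ∧ α' ⊆ β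

/-- Parallel neighbour: a neighbour such that no `(d+1)`-face contains both. -/
def Parl (G : SimpleGraph V) (d : ℕ) (α α' : Finset V) : Prop :=
  Nbr G d α α' ∧ ¬ ∃ β : Finset V, IsFace G (d + 1) β ∧ α ⊆ β ∧ α' ⊆ β

/-- The set of neighbours of `α`. -/
def Nset (G : SimpleGraph V) (d : ℕ) (α : Finset V) : Set (Finset V) := {α' | Nbr G d α α'}

/-- The set of transverse neighbours of `α`. -/
def Tset (G : SimpleGraph V) (d : ℕ) (α : Finset V) : Set (Finset V) := {α' | Transv G d α α'}

/-- The set of parallel neighbours of `α`. -/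
def Pset (G : SimpleGraph V) (d : ℕ) (α : Finset V) : Set (Finset V) := {α' | Parl G d α α'}

/-- The set of `(d+1)`-faces containing the `d`-face `α`. -/
def Hset (G : SimpleGraph V) (d : ℕ) (α : Finset V) : Set (Finset V) :=
  {β | IsFace G (d + 1) β ∧ α ⊆ β}

/-- Forman–Ricci curvature of a `d`-face. -/
noncomputable def FRC (G : SimpleGraph V) (d : ℕ) (α : Finset V) : ℤ :=
  (Hset G d α).ncard + (d + 1) - (Pset G d α).ncard

lemma my_ncard_biUnion {ι X : Type*} [Fintype X] (s : Finset ι) (f : ι → Set X)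
    (h : ∀ i ∈ s, ∀ j ∈ s, i ≠ j → Disjoint (f i) (f j)) :
    (⋃ i ∈ s, f i).ncard = ∑ i ∈ s, (f i).ncard := by
  induction s using Finset.cons_induction with
  | empty => simp
  | cons a s ha ih =>
    have hu : (⋃ i ∈ Finset.cons a s ha, f i) = f a ∪ ⋃ i ∈ s, f i := by
      simp [Set.iUnion_or, Set.iUnion_union_distrib]
    rw [hu, Finset.sum_cons,
      Set.ncard_union_eq ?_ (Set.toFinite _) (Set.toFinite _),
      ih (fun i hi j hj hij => h i (Finset.mem_cons_of_mem hi) j (Finset.mem_cons_of_mem hj) hij)]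
    simp only [Set.disjoint_iUnion_right]
    intro i hi
    exact h a (Finset.mem_cons_self a s) i (Finset.mem_cons_of_mem hi)
      (fun he => ha (he ▸ hi))

omit [Fintype V] [DecidableEq V] in
lemma pi_not_mem {G : SimpleGraph V} {S : Finset V} {v : V} (h : v ∈ pi G S) : v ∉ S :=
  fun hv => G.irrefl (h v hv)

theorem stmt14 (G : SimpleGraph V) (d : ℕ) (hd : 1 ≤ d) (α : Finset V)
    (hα : IsFace G d α) :
    FRC G d α = (d + 2) * ((pi G α).ncard : ℤ) + 2 * (d + 1) -
      ∑ γ ∈ α.powersetCard d, ((pi G γ).ncard : ℤ) := by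
  classical
  obtain ⟨hcard, hclique⟩ := hα
  have hins : ∀ v ∈ pi G α, IsFace G (d+1) (insert v α) := by
    intro v hv
    have hvα : v ∉ α := pi_not_mem hv
    refine ⟨by rw [Finset.card_insert_of_notMem hvα, hcard], ?_⟩
    rw [Finset.coe_insert]
    exact hclique.insert (fun b hb _ => (hv b hb).symm)
  -- H = image of π α
  have hH : Hset G d α = (fun v => insert v α) '' (pi G α) := by
    ext β
    constructor
    · rintro ⟨⟨hβc, hβk⟩, hsub⟩
      have h1 : (β \ α).card = 1 := by
        rw [Finset.card_sdiff_of_subset hsub, hβc, hcard]; omega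
      obtain ⟨v, hv⟩ := Finset.card_eq_one.mp h1
      have hvmem : v ∈ β \ α := hv ▸ Finset.mem_singleton_self v
      rw [Finset.mem_sdiff] at hvmem
      have hβeq : β = insert v α := by
        apply Finset.eq_of_subset_of_card_le
        · intro x hx
          by_cases hxα : x ∈ α
          · exact Finset.mem_insert_of_mem hxα
          · have : x ∈ β \ α := Finset.mem_sdiff.mpr ⟨hx, hxα⟩
            rw [hv, Finset.mem_singleton] at this
            rw [this]; exact Finset.mem_insert_self _ _
        · rw [Finset.card_insert_of_notMem hvmem.2, hcard, hβc]
      refine ⟨v, ?_, hβeq.symm⟩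
      intro x hx
      exact hβk (by exact_mod_cast hsub hx) (by exact_mod_cast hvmem.1)
        (fun he => hvmem.2 (he ▸ hx))
    · rintro ⟨v, hv, rfl⟩
      exact ⟨hins v hv, Finset.subset_insert _ _⟩
  have hHcard : (Hset G d α).ncard = (pi G α).ncard := by
    rw [hH]
    apply Set.ncard_image_of_injOn
    intro v hv w hw h
    have h' : insert v α = insert w α := h
    have hvα : v ∉ α := pi_not_mem hv
    have : v ∈ insert w α := h' ▸ Finset.mem_insert_self v α
    rcases Finset.mem_insert.mp this with h'' | h''
    · exact h''
    · exact absurd h'' hvα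
  set f : Finset V → Set (Finset V) :=
    fun γ => (fun v => insert v γ) '' (pi G γ \ ((α : Set V) ∪ pi G α)) with hf
  -- Pset decomposition
  have hP : Pset G d α = ⋃ γ ∈ α.powersetCard d, f γ := by
    ext α'
    constructor
    · rintro ⟨⟨⟨hα'c, hα'k⟩, hne, γ, hγc, hγk, hγα, hγα'⟩, hnoβ⟩
      have hγint : γ = α ∩ α' := by
        have hsub : γ ⊆ α ∩ α' := fun x hx => Finset.mem_inter.mpr ⟨hγα hx, hγα' hx⟩
        apply Finset.eq_of_subset_of_card_le hsub
        by_contra hlt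
        push_neg at hlt
        rw [hγc] at hlt
        have hle : α.card ≤ (α ∩ α').card := by
          have hub : (α ∩ α').card ≤ α.card := Finset.card_le_card Finset.inter_subset_left
          omega
        have h2 : α ∩ α' = α := Finset.eq_of_subset_of_card_le Finset.inter_subset_left hle
        have hαα' : α ⊆ α' := by
          intro x hx
          rw [← h2] at hx
          exact (Finset.mem_inter.mp hx).2
        exact hne (Finset.eq_of_subset_of_card_le hαα' (by rw [hcard, hα'c])).symm
      have h1 : (α' \ γ).card = 1 := by
        rw [Finset.card_sdiff_of_subset hγα', hα'c, hγc]; omega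
      obtain ⟨v, hv⟩ := Finset.card_eq_one.mp h1
      have hvmem : v ∈ α' \ γ := hv ▸ Finset.mem_singleton_self v
      rw [Finset.mem_sdiff] at hvmem
      have hα'eq : α' = insert v γ := by
        apply Finset.eq_of_subset_of_card_le
        · intro x hx
          by_cases hxγ : x ∈ γ
          · exact Finset.mem_insert_of_mem hxγ
          · have : x ∈ α' \ γ := Finset.mem_sdiff.mpr ⟨hx, hxγ⟩
            rw [hv, Finset.mem_singleton] at this
            rw [this]; exact Finset.mem_insert_self _ _
        · rw [Finset.card_insert_of_notMem hvmem.2, hγc, hα'c]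
      have hvα : v ∉ α := by
        intro hvα
        exact hvmem.2 (hγint ▸ Finset.mem_inter.mpr ⟨hvα, hvmem.1⟩)
      have hvπγ : v ∈ pi G γ := by
        intro x hx
        exact hα'k (by exact_mod_cast hγα' hx) (by exact_mod_cast hvmem.1)
          (fun he => hvmem.2 (he ▸ hx))
      have hvπα : v ∉ pi G α := by
        intro hvπα
        exact hnoβ ⟨insert v α, hins v hvπα, Finset.subset_insert _ _, by
          rw [hα'eq]
          exact Finset.insert_subset_insert v hγα⟩
      refine Set.mem_biUnion (Finset.mem_powersetCard.mpr ⟨hγα, hγc⟩) ?_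
      exact ⟨v, ⟨hvπγ, by simp [hvα, hvπα]⟩, hα'eq.symm⟩
    · intro hmem
      obtain ⟨γ, hγmem, v, hvmem, rfl⟩ := by
        simpa only [Set.mem_iUnion, exists_prop] using hmem
      obtain ⟨hγα, hγc⟩ := Finset.mem_powersetCard.mp hγmem
      obtain ⟨hvπγ, hvrest⟩ := hvmem
      have hvα : v ∉ α := fun h => hvrest (Or.inl h)
      have hvπα : v ∉ pi G α := fun h => hvrest (Or.inr h)
      have hvγ : v ∉ γ := fun h => hvα (hγα h)
      have hγk : G.IsClique (γ : Set V) := hclique.subset (by exact_mod_cast hγα)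
      have hface : IsFace G d (insert v γ) := by
        refine ⟨by rw [Finset.card_insert_of_notMem hvγ, hγc], ?_⟩
        rw [Finset.coe_insert]
        exact hγk.insert (fun b hb _ => (hvπγ b hb).symm)
      refine ⟨⟨hface, ?_, γ, hγc, hγk, hγα, Finset.subset_insert _ _⟩, ?_⟩
      · intro he
        exact hvα (he ▸ Finset.mem_insert_self v γ)
      · rintro ⟨β, ⟨hβc, hβk⟩, hαβ, hα'β⟩
        have hvβ : v ∈ β := hα'β (Finset.mem_insert_self v γ)
        have hsub2 : insert v α ⊆ β := Finset.insert_subset hvβ hαβ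
        have hβeq : β = insert v α := by
          apply (Finset.eq_of_subset_of_card_le hsub2 ?_).symm
          rw [Finset.card_insert_of_notMem hvα, hcard, hβc]
        apply hvπα
        intro x hx
        refine hβk ?_ ?_ (fun he => hvα (he ▸ hx))
        · exact_mod_cast hαβ hx
        · exact_mod_cast hvβ
  -- disjointness
  have hdisj : ∀ γ₁ ∈ α.powersetCard d, ∀ γ₂ ∈ α.powersetCard d, γ₁ ≠ γ₂ →
      Disjoint (f γ₁) (f γ₂) := by
    intro γ₁ h₁ γ₂ h₂ hne
    rw [Set.disjoint_left]
    rintro α' ⟨v₁, hv₁, rfl⟩ ⟨v₂, hv₂, he⟩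
    obtain ⟨hs₁, hc₁⟩ := Finset.mem_powersetCard.mp h₁
    obtain ⟨hs₂, hc₂⟩ := Finset.mem_powersetCard.mp h₂
    have hv₁α : v₁ ∉ α := fun h => hv₁.2 (Or.inl h)
    have hv₂α : v₂ ∉ α := fun h => hv₂.2 (Or.inl h)
    have key : ∀ (γ : Finset V) (v : V), γ ⊆ α → v ∉ α → (insert v γ) ∩ α = γ := by
      intro γ v hγ hv
      ext x
      simp only [Finset.mem_inter, Finset.mem_insert]
      constructor
      · rintro ⟨h | h, hxα⟩
        · exact absurd (h ▸ hxα) hv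
        · exact h
      · intro h; exact ⟨Or.inr h, hγ h⟩
    have he' : insert v₂ γ₂ = insert v₁ γ₁ := he
    apply hne
    rw [← key γ₁ v₁ hs₁ hv₁α, ← key γ₂ v₂ hs₂ hv₂α, he']
  -- cardinality of each piece
  have hpiece : ∀ γ ∈ α.powersetCard d,
      (f γ).ncard + (1 + (pi G α).ncard) = (pi G γ).ncard := by
    intro γ hγmem
    obtain ⟨hγα, hγc⟩ := Finset.mem_powersetCard.mp hγmem
    have h1 : (α \ γ).card = 1 := by rw [Finset.card_sdiff_of_subset hγα, hcard, hγc]; omega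
    obtain ⟨w, hw⟩ := Finset.card_eq_one.mp h1
    have hwmem : w ∈ α \ γ := hw ▸ Finset.mem_singleton_self w
    rw [Finset.mem_sdiff] at hwmem
    have hwπγ : w ∈ pi G γ := by
      intro x hx
      exact hclique (by exact_mod_cast hγα hx) (by exact_mod_cast hwmem.1)
        (fun he => hwmem.2 (he ▸ hx))
    have hwπα : w ∉ pi G α := fun h => pi_not_mem h hwmem.1
    have himg : (f γ).ncard = (pi G γ \ ((α : Set V) ∪ pi G α)).ncard := by
      apply Set.ncard_image_of_injOn
      intro v hv w' hw' h
      have h' : insert v γ = insert w' γ := h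
      have hvγ : v ∉ γ := fun hm => hv.2 (Or.inl (by exact_mod_cast hγα hm))
      have : v ∈ insert w' γ := h' ▸ Finset.mem_insert_self v γ
      rcases Finset.mem_insert.mp this with h'' | h''
      · exact h''
      · exact absurd h'' hvγ
    have hsetdiff : pi G γ \ ((α : Set V) ∪ pi G α) = pi G γ \ ({w} ∪ pi G α) := by
      ext x
      simp only [Set.mem_diff, Set.mem_union, Set.mem_singleton_iff, Finset.mem_coe]
      constructor
      · rintro ⟨hx, hrest⟩
        push_neg at hrest
        refine ⟨hx, ?_⟩
        rintro (rfl | h)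
        · exact hrest.1 hwmem.1
        · exact hrest.2 h
      · rintro ⟨hx, hrest⟩
        push_neg at hrest
        refine ⟨hx, ?_⟩
        rintro (hxα | h)
        · have hxγ : x ∉ γ := pi_not_mem hx
          have : x ∈ α \ γ := Finset.mem_sdiff.mpr ⟨hxα, hxγ⟩
          rw [hw, Finset.mem_singleton] at this
          exact hrest.1 this
        · exact hrest.2 h
    have hsubw : ({w} : Set V) ∪ pi G α ⊆ pi G γ := by
      apply Set.union_subset
      · exact Set.singleton_subset_iff.mpr hwπγ
      · intro x hx a ha
        exact hx a (hγα ha)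
    have hkey := Set.ncard_diff_add_ncard_of_subset hsubw (Set.toFinite _)
    rw [Set.singleton_union, Set.ncard_insert_of_notMem hwπα (Set.toFinite _)] at hkey
    rw [himg, hsetdiff, ← Set.singleton_union] at *
    omega
  have hPcard : (Pset G d α).ncard = ∑ γ ∈ α.powersetCard d, (f γ).ncard := by
    rw [hP]; exact my_ncard_biUnion _ _ hdisj
  have hpc : (α.powersetCard d).card = d + 1 := by
    rw [Finset.card_powersetCard, hcard, Nat.choose_succ_self_right]
  have hsum : ∑ γ ∈ α.powersetCard d, ((pi G γ).ncard : ℤ)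
      = (∑ γ ∈ α.powersetCard d, ((f γ).ncard : ℤ))
        + ((d : ℤ) + 1) * (1 + ((pi G α).ncard : ℤ)) := by
    have hc : ∀ γ ∈ α.powersetCard d,
        ((pi G γ).ncard : ℤ) = ((f γ).ncard : ℤ) + (1 + ((pi G α).ncard : ℤ)) := by
      intro γ hγ
      have := hpiece γ hγ
      push_cast [← this]
      ring
    rw [Finset.sum_congr rfl hc, Finset.sum_add_distrib, Finset.sum_const, hpc]
    push_cast
    ring
  unfold FRC
  rw [hHcard, hPcard]
  push_cast
  linear_combination hsum
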